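/- arXiv:1010.2102 — 3 statements merged into one kernel-verified Lean document; each statement's English description precedes it below -/
import Mathlib

section
/- (Lin's upper bound) The binary Bayes error is at most half of H(π) minus the Jensen-Shannon divergence: p_Bayes ≤ (1/2)·(H(π) − JS_π(p1,p2)). -/
noncomputable def entropy2 {X : Type*} [Fintype X] (P : X → ℝ) : ℝ :=
  -∑ x, P x * Real.logb 2 (P x)

lemma log2_pos : (0:ℝ) < Real.log 2 := Real.log_pos (by norm_num)

lemma bern_log {x : ℝ} (hx : 0 ≤ x) (hx1 : x ≤ 1) : x * Real.log 2 ≤ Real.log (1 + x) := by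
  have h : (2:ℝ) ^ x ≤ 1 + x := by
    have := rpow_one_add_le_one_add_mul_self (s := 1) (by norm_num) hx hx1
    simpa [one_add_one_eq_two] using this
  calc x * Real.log 2 = Real.log ((2:ℝ) ^ x) := (Real.log_rpow (by norm_num) x).symm
    _ ≤ Real.log (1 + x) := Real.log_le_log (Real.rpow_pos_of_pos (by norm_num) x) h

lemma key' {a b : ℝ} (ha : 0 ≤ a) (hab : a ≤ b) :
    a ≤ (1/2) * ((a+b) * Real.logb 2 (a+b) - a * Real.logb 2 a - b * Real.logb 2 b) := by
  rcases eq_or_lt_of_le ha with rfl | ha0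
  · simp
  have hb0 : 0 < b := lt_of_lt_of_le ha0 hab
  have hab0 : 0 < a + b := by linarith
  have h1 : a * Real.log 2 ≤ a * (Real.log (a+b) - Real.log a) := by
    have h2a : Real.log (2*a) ≤ Real.log (a+b) := Real.log_le_log (by linarith) (by linarith)
    rw [Real.log_mul (by norm_num) (ne_of_gt ha0)] at h2a
    nlinarith
  have h2 : a * Real.log 2 ≤ b * (Real.log (a+b) - Real.log b) := by
    have hx : 0 ≤ a / b := le_of_lt (div_pos ha0 hb0)
    have hx1 : a / b ≤ 1 := (div_le_one hb0).mpr hab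
    have := bern_log hx hx1
    have heq : (1 : ℝ) + a / b = (a+b)/b := by field_simp; ring
    rw [heq, Real.log_div (ne_of_gt hab0) (ne_of_gt hb0)] at this
    have := mul_le_mul_of_nonneg_left this (le_of_lt hb0)
    calc a * Real.log 2 = b * (a / b * Real.log 2) := by field_simp
      _ ≤ b * (Real.log (a+b) - Real.log b) := this
  have hmain : 2 * a * Real.log 2 ≤ (a+b) * Real.log (a+b) - a * Real.log a - b * Real.log b := by
    nlinarith
  have hL := log2_pos
  rw [Real.logb, Real.logb, Real.logb]
  rw [show (1/2 : ℝ) * ((a + b) * (Real.log (a + b) / Real.log 2) - a * (Real.log a / Real.log 2)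
      - b * (Real.log b / Real.log 2))
      = ((a+b) * Real.log (a+b) - a * Real.log a - b * Real.log b) / (2 * Real.log 2) by
    field_simp]
  rw [le_div_iff₀ (by positivity)]
  nlinarith

lemma key {a b : ℝ} (ha : 0 ≤ a) (hb : 0 ≤ b) :
    min a b ≤ (1/2) * ((a+b) * Real.logb 2 (a+b) - a * Real.logb 2 a - b * Real.logb 2 b) := by
  rcases le_total a b with h | h
  · rw [min_eq_left h]; exact key' ha h
  · rw [min_eq_right h]
    have := key' hb h
    rw [show b + a = a + b by ring] at this
    linarith

lemma mul_logb_split {u v : ℝ} (hu : 0 ≤ u) (hv : 0 ≤ v) :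
    (u*v) * Real.logb 2 (u*v) = v * (u * Real.logb 2 u) + u * (v * Real.logb 2 v) := by
  rcases eq_or_lt_of_le hu with rfl | hu0
  · simp
  rcases eq_or_lt_of_le hv with rfl | hv0
  · simp
  rw [Real.logb_mul (ne_of_gt hu0) (ne_of_gt hv0)]
  ring

theorem lin_upper_bound {X : Type*} [Fintype X] (p1 p2 : X → ℝ) (π1 π2 : ℝ)
    (hp1 : ∀ x, 0 ≤ p1 x) (hp1s : ∑ x, p1 x = 1)
    (hp2 : ∀ x, 0 ≤ p2 x) (hp2s : ∑ x, p2 x = 1)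
    (hπ1 : 0 ≤ π1) (hπ2 : 0 ≤ π2) (hπ : π1 + π2 = 1) :
    ∑ x, min (π1 * p1 x) (π2 * p2 x)
      ≤ (1 / 2) * ((-(π1 * Real.logb 2 π1) - π2 * Real.logb 2 π2)
          - (entropy2 (fun x => π1 * p1 x + π2 * p2 x)
              - π1 * entropy2 p1 - π2 * entropy2 p2)) := by
  have hB1 : ∑ x, (π1 * p1 x) * Real.logb 2 (π1 * p1 x)
      = π1 * Real.logb 2 π1 + π1 * ∑ x, p1 x * Real.logb 2 (p1 x) := by
    rw [Finset.sum_congr rfl (fun x _ => mul_logb_split hπ1 (hp1 x)),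
      Finset.sum_add_distrib, ← Finset.mul_sum, ← Finset.sum_mul, hp1s, one_mul]
  have hB2 : ∑ x, (π2 * p2 x) * Real.logb 2 (π2 * p2 x)
      = π2 * Real.logb 2 π2 + π2 * ∑ x, p2 x * Real.logb 2 (p2 x) := by
    rw [Finset.sum_congr rfl (fun x _ => mul_logb_split hπ2 (hp2 x)),
      Finset.sum_add_distrib, ← Finset.mul_sum, ← Finset.sum_mul, hp2s, one_mul]
  have hinner : ((-(π1 * Real.logb 2 π1) - π2 * Real.logb 2 π2)
          - (entropy2 (fun x => π1 * p1 x + π2 * p2 x)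
              - π1 * entropy2 p1 - π2 * entropy2 p2))
      = ∑ x, ((π1 * p1 x + π2 * p2 x) * Real.logb 2 (π1 * p1 x + π2 * p2 x)
          - (π1 * p1 x) * Real.logb 2 (π1 * p1 x)
          - (π2 * p2 x) * Real.logb 2 (π2 * p2 x)) := by
    have e1 : ∑ x, (π1*p1 x + π2*p2 x) * Real.logb 2 (π1*p1 x + π2*p2 x)
        = ∑ x, π1*p1 x*Real.logb 2 (π1*p1 x + π2*p2 x)
          + ∑ x, π2*p2 x*Real.logb 2 (π1*p1 x + π2*p2 x) := by
      rw [← Finset.sum_add_distrib]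
      exact Finset.sum_congr rfl fun x _ => by ring
    have e2 : ∑ x, π1*p1 x*Real.logb 2 (p1 x) = π1 * ∑ x, p1 x*Real.logb 2 (p1 x) := by
      rw [Finset.mul_sum]
      exact Finset.sum_congr rfl fun x _ => by ring
    have e3 : ∑ x, π2*p2 x*Real.logb 2 (p2 x) = π2 * ∑ x, p2 x*Real.logb 2 (p2 x) := by
      rw [Finset.mul_sum]
      exact Finset.sum_congr rfl fun x _ => by ring
    simp only [entropy2]
    rw [Finset.sum_sub_distrib, Finset.sum_sub_distrib, hB1, hB2, e1]

    ring
  rw [hinner, Finset.mul_sum]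
  exact Finset.sum_le_sum fun x _ => key (mul_nonneg hπ1 (hp1 x)) (mul_nonneg hπ2 (hp2 x))
end

section
/- (Lin's lower bound) The binary Bayes error is at least one quarter of the square of H(π) minus the Jensen-Shannon divergence: p_Bayes ≥ (1/4)·(H(π) − JS_π(p1,p2))². -/
open Real Finset

namespace Real

lemma negMulLog_le_sqrt_mul_one_sub {t : ℝ} (h0 : 0 ≤ t) (h1 : t ≤ 1) :
    negMulLog t ≤ √t * (1 - t) := by
  rcases h0.eq_or_lt with rfl | ht
  · simp
  set s := √t
  have hs : 0 < s := sqrt_pos.2 ht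
  have hts : t = s ^ 2 := (sq_sqrt h0).symm
  -- `log u ≤ sinh (log u) = (u - u⁻¹) / 2` at `u = s⁻¹ ≥ 1`
  have hlog : 2 * log s⁻¹ ≤ s⁻¹ - s := by
    have := self_le_sinh_iff.2 (log_nonneg ((one_le_inv₀ hs).2 (sqrt_le_one.2 h1)))
    rw [sinh_log (inv_pos.2 hs), inv_inv] at this
    linarith
  calc negMulLog t = s ^ 2 * (2 * log s⁻¹) := by
        rw [negMulLog, hts, log_pow, log_inv]; push_cast; ring
    _ ≤ s ^ 2 * (s⁻¹ - s) := by gcongr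
    _ = s * (1 - t) := by rw [hts]; field_simp

lemma binEntropy_le_sqrt {t : ℝ} (h0 : 0 ≤ t) (h1 : t ≤ 1) : binEntropy t ≤ 5 / 4 * √t := by
  have hA := negMulLog_le_sqrt_mul_one_sub h0 h1
  have hB := negMulLog_le_one_sub_self (x := 1 - t) (by linarith)
  rw [binEntropy_eq_negMulLog_add_negMulLog_one_sub]
  nlinarith [sq_sqrt h0, mul_nonneg (sqrt_nonneg t) (sq_nonneg (√t - 1 / 2))]

lemma binEntropy_le_sqrt_min {t : ℝ} (h0 : 0 ≤ t) (h1 : t ≤ 1) :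
    binEntropy t ≤ 5 / 4 * √(min t (1 - t)) := by
  rcases le_total t (1 - t) with h | h
  · rw [min_eq_left h]
    exact binEntropy_le_sqrt h0 h1
  · rw [min_eq_right h, ← binEntropy_one_sub]
    exact binEntropy_le_sqrt (by linarith) (by linarith)

lemma negMulLog_add_negMulLog_sub_negMulLog_add (a b : ℝ) :
    negMulLog a + negMulLog b - negMulLog (a + b) = (a + b) * binEntropy (a / (a + b)) := by
  rcases eq_or_ne (a + b) 0 with hm | hm
  · rw [eq_neg_of_add_eq_zero_right hm, negMulLog, negMulLog, log_neg_eq_log]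
    simp
  set t := a / (a + b)
  have hat : a = (a + b) * t := (mul_div_cancel₀ a hm).symm
  have hbt : b = (a + b) * (1 - t) := by rw [mul_sub, mul_one, ← hat]; ring
  calc negMulLog a + negMulLog b - negMulLog (a + b)
      = negMulLog ((a + b) * t) + negMulLog ((a + b) * (1 - t)) - negMulLog (a + b) := by
        rw [← hat, ← hbt]
    _ = (a + b) * binEntropy t := by
        rw [negMulLog_mul, negMulLog_mul, binEntropy_eq_negMulLog_add_negMulLog_one_sub]; ring

lemma negMulLog_add_negMulLog_sub_negMulLog_add_nonneg {a b : ℝ} (ha : 0 ≤ a) (hb : 0 ≤ b) :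
    0 ≤ negMulLog a + negMulLog b - negMulLog (a + b) := by
  rw [negMulLog_add_negMulLog_sub_negMulLog_add]
  exact mul_nonneg (add_nonneg ha hb)
    (binEntropy_nonneg (div_nonneg ha (add_nonneg ha hb)) (div_le_one_of_le₀ (by linarith)
      (add_nonneg ha hb)))

lemma negMulLog_add_negMulLog_sub_negMulLog_add_le {a b : ℝ} (ha : 0 ≤ a) (hb : 0 ≤ b) :
    negMulLog a + negMulLog b - negMulLog (a + b) ≤ 5 / 4 * √((a + b) * min a b) := by
  rcases (add_nonneg ha hb).eq_or_lt with hm | hm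
  · obtain ⟨rfl, rfl⟩ := (add_eq_zero_iff_of_nonneg ha hb).1 hm.symm
    simp
  have hmin : min (a / (a + b)) (1 - a / (a + b)) = min a b / (a + b) := by
    rw [one_sub_div hm.ne', add_sub_cancel_left, min_div_div_right hm.le]
  rw [negMulLog_add_negMulLog_sub_negMulLog_add]
  calc (a + b) * binEntropy (a / (a + b))
      ≤ (a + b) * (5 / 4 * √(min a b / (a + b))) := by
        rw [← hmin]
        exact mul_le_mul_of_nonneg_left (binEntropy_le_sqrt_min (div_nonneg ha hm.le)
          (div_le_one_of_le₀ (by linarith) hm.le)) hm.le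
    _ = 5 / 4 * √((a + b) * min a b) := by
        rw [sqrt_div' _ hm.le, sqrt_mul hm.le]
        field_simp
        rw [sq_sqrt hm.le]
        ring

lemma sum_negMulLog_add_negMulLog_sub_negMulLog_add_le {ι : Type*} (s : Finset ι)
    {a b : ι → ℝ} (ha : ∀ i, 0 ≤ a i) (hb : ∀ i, 0 ≤ b i) :
    ∑ i ∈ s, (negMulLog (a i) + negMulLog (b i) - negMulLog (a i + b i))
      ≤ 5 / 4 * (√(∑ i ∈ s, (a i + b i)) * √(∑ i ∈ s, min (a i) (b i))) := by
  calc ∑ i ∈ s, (negMulLog (a i) + negMulLog (b i) - negMulLog (a i + b i))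
      ≤ ∑ i ∈ s, 5 / 4 * (√(a i + b i) * √(min (a i) (b i))) := by
        refine sum_le_sum fun i _ => ?_
        rw [← sqrt_mul (add_nonneg (ha i) (hb i))]
        exact negMulLog_add_negMulLog_sub_negMulLog_add_le (ha i) (hb i)
    _ = 5 / 4 * ∑ i ∈ s, √(a i + b i) * √(min (a i) (b i)) := (mul_sum _ _ _).symm
    _ ≤ _ := by
        gcongr
        exact sum_sqrt_mul_sqrt_le s (fun i => add_nonneg (ha i) (hb i))
          (fun i => le_min (ha i) (hb i))

end Real

lemma entropy2_eq_sum_negMulLog_div {X : Type*} [Fintype X] (P : X → ℝ) :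
    entropy2 P = (∑ x, negMulLog (P x)) / log 2 := by
  simp only [entropy2, negMulLog, logb, sum_div, ← sum_neg_distrib]
  congr 1 with x
  ring

lemma sum_negMulLog_const_mul {X : Type*} [Fintype X] (c : ℝ) {p : X → ℝ}
    (hp : ∑ x, p x = 1) :
    ∑ x, negMulLog (c * p x) = negMulLog c + c * ∑ x, negMulLog (p x) := by
  simp only [negMulLog_mul, sum_add_distrib, ← sum_mul, ← mul_sum, hp, one_mul]

lemma entropy_sub_jensenShannon_eq {X : Type*} [Fintype X] {p1 p2 : X → ℝ}
    (hp1s : ∑ x, p1 x = 1) (hp2s : ∑ x, p2 x = 1) (π1 π2 : ℝ) :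
    (-(π1 * logb 2 π1) - π2 * logb 2 π2)
        - (entropy2 (fun x => π1 * p1 x + π2 * p2 x) - π1 * entropy2 p1 - π2 * entropy2 p2)
      = (∑ x, (negMulLog (π1 * p1 x) + negMulLog (π2 * p2 x)
          - negMulLog (π1 * p1 x + π2 * p2 x))) / log 2 := by
  rw [entropy2_eq_sum_negMulLog_div, entropy2_eq_sum_negMulLog_div,
    entropy2_eq_sum_negMulLog_div, sum_sub_distrib, sum_add_distrib,
    sum_negMulLog_const_mul _ hp1s, sum_negMulLog_const_mul _ hp2s]
  simp only [negMulLog, logb]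
  ring

theorem lin_lower_bound {X : Type*} [Fintype X] (p1 p2 : X → ℝ) (π1 π2 : ℝ)
    (hp1 : ∀ x, 0 ≤ p1 x) (hp1s : ∑ x, p1 x = 1)
    (hp2 : ∀ x, 0 ≤ p2 x) (hp2s : ∑ x, p2 x = 1)
    (hπ1 : 0 ≤ π1) (hπ2 : 0 ≤ π2) (hπ : π1 + π2 = 1) :
    (1 / 4) * ((-(π1 * Real.logb 2 π1) - π2 * Real.logb 2 π2)
        - (entropy2 (fun x => π1 * p1 x + π2 * p2 x)
            - π1 * entropy2 p1 - π2 * entropy2 p2)) ^ 2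
      ≤ ∑ x, min (π1 * p1 x) (π2 * p2 x) := by
  have ha : ∀ x, 0 ≤ π1 * p1 x := fun x => mul_nonneg hπ1 (hp1 x)
  have hb : ∀ x, 0 ≤ π2 * p2 x := fun x => mul_nonneg hπ2 (hp2 x)
  have hmass : ∑ x, (π1 * p1 x + π2 * p2 x) = 1 := by
    rw [sum_add_distrib, ← mul_sum, ← mul_sum, hp1s, hp2s, mul_one, mul_one, hπ]
  set S := ∑ x, (negMulLog (π1 * p1 x) + negMulLog (π2 * p2 x)
    - negMulLog (π1 * p1 x + π2 * p2 x))
  set B := ∑ x, min (π1 * p1 x) (π2 * p2 x)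
  have hS0 : 0 ≤ S :=
    sum_nonneg fun x _ => negMulLog_add_negMulLog_sub_negMulLog_add_nonneg (ha x) (hb x)
  have hSB : S ≤ 5 / 4 * √B := by
    simpa only [hmass, sqrt_one, one_mul] using
      sum_negMulLog_add_negMulLog_sub_negMulLog_add_le univ ha hb
  have hlog2 : 5 / 8 < log 2 := lt_trans (by norm_num) log_two_gt_d9
  have hE : S / log 2 ≤ 2 * √B := by
    rw [div_le_iff₀ (by linarith)]
    nlinarith [sqrt_nonneg B]
  rw [entropy_sub_jensenShannon_eq hp1s hp2s]
  calc 1 / 4 * (S / log 2) ^ 2 ≤ 1 / 4 * (2 * √B) ^ 2 := by gcongr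
    _ = B := by
        rw [mul_pow, sq_sqrt (sum_nonneg fun x _ => le_min (ha x) (hb x))]
        ring
end

section
/- (Lin's multiclass bounds) For a k-class problem, (1/(4(k−1)))·J_k² ≤ p(error_k) ≤ (1/2)·J_k, where J_k = H(π) − JS_π(p1,…,p_k). -/
open Finset

section
open Real

lemma mul_log_two_le_log_one_add {v : ℝ} (h0 : 0 ≤ v) (h1 : v ≤ 1) :
    v * log 2 ≤ log (1 + v) := by
  have h := rpow_one_add_le_one_add_mul_self (s := 1) (by norm_num) h0 h1
  rw [← log_rpow two_pos]
  exact log_le_log (by positivity) (by norm_num at h ⊢; linarith)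

lemma log_one_add_le_mul_log_two {v : ℝ} (h1 : 1 ≤ v) : log (1 + v) ≤ v * log 2 := by
  have h := one_add_mul_self_le_rpow_one_add (s := 1) (by norm_num) h1
  rw [← log_rpow two_pos]
  exact log_le_log (by positivity) (by norm_num at h ⊢; linarith)

lemma log_one_add_sq_le {v : ℝ} (hv : 0 ≤ v) : log (1 + v ^ 2) ≤ 2 * log 2 * v := by
  have hl := log_two_gt_d9
  rcases le_total v 1 with h | h
  · calc log (1 + v ^ 2) ≤ v ^ 2 := by
          linarith [log_le_sub_one_of_pos (by positivity : 0 < 1 + v ^ 2)]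
      _ ≤ v := by nlinarith
      _ ≤ 2 * log 2 * v := by nlinarith
  · calc log (1 + v ^ 2) ≤ log ((1 + v) ^ 2) := log_le_log (by positivity) (by nlinarith)
      _ = 2 * log (1 + v) := by rw [log_pow]; norm_num
      _ ≤ 2 * log 2 * v := by linarith [log_one_add_le_mul_log_two h]

lemma log_le_two_mul_log_two_mul_sqrt_sub_one {u : ℝ} (hu : 1 ≤ u) :
    log u ≤ 2 * log 2 * √(u - 1) := by
  have h := log_one_add_sq_le (sqrt_nonneg (u - 1))
  rwa [sq_sqrt (by linarith), add_sub_cancel] at h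

lemma two_mul_log_two_mul_one_sub_le_neg_log {u : ℝ} (h0 : 0 < u) (h : u ≤ 1 / 2) :
    2 * log 2 * (1 - u) ≤ -log u := by
  have h2u := log_le_sub_one_of_pos (by positivity : 0 < 2 * u)
  rw [log_mul two_ne_zero h0.ne'] at h2u
  nlinarith [log_two_lt_d9]

lemma one_sub_mul_log_one_add_le_negMulLog {z : ℝ} (h0 : 0 ≤ z) (h1 : z ≤ 1) :
    (1 - z) * log (1 + z) ≤ negMulLog z := by
  rcases h0.eq_or_lt with rfl | hz
  · simp
  calc (1 - z) * log (1 + z) ≤ (1 - z) * z :=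
        mul_le_mul_of_nonneg_left (by linarith [log_le_sub_one_of_pos (by positivity : 0 < 1 + z)])
          (by linarith)
    _ ≤ z * -log z := by nlinarith [log_le_sub_one_of_pos hz]
    _ = negMulLog z := by rw [negMulLog]; ring

/-- `(x + y) · h(y / (x + y))`, in nats. -/
noncomputable def scaledBinEntropy (x y : ℝ) : ℝ := negMulLog x + negMulLog y - negMulLog (x + y)

lemma scaledBinEntropy_comm (x y : ℝ) : scaledBinEntropy x y = scaledBinEntropy y x := by
  rw [scaledBinEntropy, scaledBinEntropy, add_comm x, add_comm (negMulLog x)]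

lemma scaledBinEntropy_mul (c x y : ℝ) :
    scaledBinEntropy (c * x) (c * y) = c * scaledBinEntropy x y := by
  simp only [scaledBinEntropy, ← mul_add, negMulLog_mul]
  ring

lemma two_mul_log_two_mul_le_scaledBinEntropy_one {z : ℝ} (h0 : 0 ≤ z) (h1 : z ≤ 1) :
    2 * log 2 * z ≤ scaledBinEntropy 1 z := by
  rcases h0.eq_or_lt with rfl | hz
  · simp [scaledBinEntropy]
  have hrest : z * log 2 ≤ z * (log (1 + z) - log z) := by
    rw [← log_div (by positivity) hz.ne']
    exact mul_le_mul_of_nonneg_left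
      (log_le_log two_pos (by rw [le_div_iff₀ hz]; linarith)) h0
  have hfirst := mul_log_two_le_log_one_add h0 h1
  simp only [scaledBinEntropy, negMulLog, log_one]
  nlinarith

lemma scaledBinEntropy_one_sq_le {w : ℝ} (h0 : 0 ≤ w) (h1 : w ≤ 1) :
    scaledBinEntropy 1 (w ^ 2) ≤ 2 * log 2 * w := by
  rcases h0.eq_or_lt with rfl | hw
  · simp [scaledBinEntropy]
  -- `χ w = scaledBinEntropy 1 (w ^ 2) / w`, which increases to `χ 1 = 2 log 2`.
  set χ : ℝ → ℝ := fun w => (w + w⁻¹) * log (1 + w ^ 2) - 2 * w * log w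
  have hχ' : ∀ w : ℝ, 0 < w →
      HasDerivAt χ ((1 - (w ^ 2)⁻¹) * log (1 + w ^ 2) - 2 * log w) w := by
    intro w hw
    have h := (((hasDerivAt_id w).add (hasDerivAt_inv hw.ne')).mul
      (((hasDerivAt_pow 2 w).const_add 1).log (by positivity))).sub
      (((hasDerivAt_id w).const_mul 2).mul (hasDerivAt_log hw.ne'))
    refine h.congr_deriv ?_
    simp only [Pi.add_apply, id, Nat.cast_ofNat]
    field_simp
    ring
  have hmono : MonotoneOn χ (Set.Ioc 0 1) := by
    refine monotoneOn_of_hasDerivWithinAt_nonneg (convex_Ioc 0 1)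
      (fun v hv => (hχ' v hv.1).continuousAt.continuousWithinAt)
      (fun v hv => (hχ' v (interior_subset hv).1).hasDerivWithinAt) ?_
    rw [interior_Ioc]
    rintro v ⟨hv0, hv1⟩
    have key := one_sub_mul_log_one_add_le_negMulLog (sq_nonneg v) (by nlinarith)
    rw [negMulLog, log_pow] at key
    have hv2 : 0 < v ^ 2 := by positivity
    refine (mul_nonneg_iff_of_pos_left hv2).1 ?_
    rw [show v ^ 2 * ((1 - (v ^ 2)⁻¹) * log (1 + v ^ 2) - 2 * log v)
        = (v ^ 2 - 1) * log (1 + v ^ 2) - v ^ 2 * (2 * log v) by field_simp]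
    push_cast at key
    linarith
  have hχw : χ w ≤ 2 * log 2 := by
    have := hmono ⟨hw, h1⟩ ⟨one_pos, le_rfl⟩ h1
    norm_num [χ] at this
    simp only [χ]
    linarith
  calc scaledBinEntropy 1 (w ^ 2) = w * χ w := by
        simp only [scaledBinEntropy, negMulLog, χ, log_pow, log_one]
        field_simp
        ring
    _ ≤ w * (2 * log 2) := mul_le_mul_of_nonneg_left hχw h0
    _ = 2 * log 2 * w := by ring

lemma two_mul_log_two_mul_le_scaledBinEntropy {x y : ℝ} (hy : 0 ≤ y) (hyx : y ≤ x) :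
    2 * log 2 * y ≤ scaledBinEntropy x y := by
  rcases (hy.trans hyx).eq_or_lt with rfl | hx
  · simp [le_antisymm hyx hy, scaledBinEntropy]
  have h := two_mul_log_two_mul_le_scaledBinEntropy_one (div_nonneg hy hx.le)
    ((div_le_one hx).2 hyx)
  calc 2 * log 2 * y = x * (2 * log 2 * (y / x)) := by field_simp
    _ ≤ x * scaledBinEntropy 1 (y / x) := mul_le_mul_of_nonneg_left h hx.le
    _ = scaledBinEntropy x y := by rw [← scaledBinEntropy_mul, mul_one, mul_div_cancel₀ _ hx.ne']

lemma scaledBinEntropy_le {x y : ℝ} (hx : 0 ≤ x) (hy : 0 ≤ y) :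
    scaledBinEntropy x y ≤ 2 * log 2 * √(x * y) := by
  wlog hyx : y ≤ x generalizing x y
  · rw [scaledBinEntropy_comm, mul_comm x]
    exact this hy hx (by linarith)
  rcases hx.eq_or_lt with rfl | hx
  · simp [le_antisymm hyx hy, scaledBinEntropy]
  have hw0 : 0 ≤ √(y / x) := sqrt_nonneg _
  have hw1 : √(y / x) ≤ 1 := sqrt_le_one.2 ((div_le_one hx).2 hyx)
  calc scaledBinEntropy x y = x * scaledBinEntropy 1 (√(y / x) ^ 2) := by
        rw [sq_sqrt (div_nonneg hy hx.le), ← scaledBinEntropy_mul, mul_one,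
          mul_div_cancel₀ _ hx.ne']
    _ ≤ x * (2 * log 2 * √(y / x)) :=
        mul_le_mul_of_nonneg_left (scaledBinEntropy_one_sq_le hw0 hw1) hx.le
    _ = 2 * log 2 * √(x * y) := by
        rw [show x * y = x ^ 2 * (y / x) by field_simp, sqrt_mul (sq_nonneg x), sqrt_sq hx.le]
        ring

variable {ι : Type*}

/-- `(∑ a) · H(a / ∑ a)`, in nats. -/
noncomputable def scaledEntropy (s : Finset ι) (a : ι → ℝ) : ℝ :=
  ∑ i ∈ s, negMulLog (a i) - negMulLog (∑ i ∈ s, a i)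

lemma scaledEntropy_eq_scaledBinEntropy_add [DecidableEq ι] {s : Finset ι} {i : ι} (hi : i ∈ s)
    (a : ι → ℝ) :
    scaledEntropy s a =
      scaledBinEntropy (a i) (∑ j ∈ s.erase i, a j) + scaledEntropy (s.erase i) a := by
  rw [scaledEntropy, scaledEntropy, scaledBinEntropy, ← add_sum_erase s a hi,
    ← add_sum_erase s (fun j => negMulLog (a j)) hi]
  ring

lemma mul_log_sub_log_le_scaledEntropy {s : Finset ι} {a : ι → ℝ} {c : ℝ}
    (ha : ∀ i ∈ s, 0 ≤ a i) (hc : ∀ i ∈ s, a i ≤ c) :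
    (∑ i ∈ s, a i) * (log (∑ i ∈ s, a i) - log c) ≤ scaledEntropy s a := by
  have hterm : ∀ i ∈ s, a i * log (a i) ≤ a i * log c := by
    intro i hi
    rcases (ha i hi).eq_or_lt with h | h
    · simp [← h]
    · exact mul_le_mul_of_nonneg_left (log_le_log h (hc i hi)) h.le
  have h := sum_le_sum hterm
  rw [← sum_mul] at h
  simp only [scaledEntropy, negMulLog, neg_mul, sum_neg_distrib]
  linarith

lemma scaledEntropy_nonneg {s : Finset ι} {a : ι → ℝ} (ha : ∀ i ∈ s, 0 ≤ a i) :
    0 ≤ scaledEntropy s a := by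
  simpa using mul_log_sub_log_le_scaledEntropy ha fun i hi => single_le_sum ha hi

lemma scaledEntropy_le_mul_log_card {s : Finset ι} {a : ι → ℝ} (ha : ∀ i ∈ s, 0 ≤ a i) :
    scaledEntropy s a ≤ (∑ i ∈ s, a i) * log #s := by
  rcases s.eq_empty_or_nonempty with rfl | hs
  · simp [scaledEntropy]
  have hn : (0 : ℝ) < #s := by exact_mod_cast hs.card_pos
  have h := concaveOn_negMulLog.le_map_sum (t := s) (w := fun _ => (#s : ℝ)⁻¹) (p := a)
    (fun _ _ => by positivity) (by simp [hn.ne']) ha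
  have hinv : negMulLog (#s : ℝ)⁻¹ = (#s : ℝ)⁻¹ * log #s := by simp [negMulLog, log_inv]
  simp only [smul_eq_mul, ← mul_sum, negMulLog_mul, hinv] at h
  rw [scaledEntropy]
  field_simp at h
  linarith

theorem Finset.sup'_le_sum {M : Type*} [AddCommMonoid M] [LinearOrder M] [IsOrderedAddMonoid M]
    {s : Finset ι} (hs : s.Nonempty) {a : ι → M} (ha : ∀ i ∈ s, 0 ≤ a i) :
    s.sup' hs a ≤ ∑ i ∈ s, a i :=
  sup'_le hs a fun _ hi => single_le_sum ha hi

lemma two_mul_log_two_mul_sub_sup'_le_scaledEntropy {s : Finset ι} (hs : s.Nonempty)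
    {a : ι → ℝ} (ha : ∀ i ∈ s, 0 ≤ a i) :
    2 * log 2 * (∑ i ∈ s, a i - s.sup' hs a) ≤ scaledEntropy s a := by
  classical
  obtain ⟨i, hi, hmi⟩ := exists_mem_eq_sup' hs a
  rw [hmi]
  have hle : ∀ j ∈ s, a j ≤ a i := fun j hj => hmi ▸ le_sup' a hj
  have hrest : ∑ j ∈ s.erase i, a j = ∑ j ∈ s, a j - a i := by
    rw [← add_sum_erase s a hi]; ring
  have hrest0 : 0 ≤ ∑ j ∈ s, a j - a i :=
    hrest ▸ sum_nonneg fun j hj => ha j (mem_of_mem_erase hj)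
  rcases le_or_gt (∑ j ∈ s, a j - a i) (a i) with h | h
  · rw [scaledEntropy_eq_scaledBinEntropy_add hi, hrest]
    linarith [two_mul_log_two_mul_le_scaledBinEntropy hrest0 h,
      scaledEntropy_nonneg (s := s.erase i) fun j hj => ha j (mem_of_mem_erase hj)]
  · have hm : 0 < a i := by
      by_contra! hm
      linarith [ha i hi, sum_nonpos fun j hj => (hle j hj).trans hm]
    have hS : 0 < ∑ j ∈ s, a j := by linarith
    calc 2 * log 2 * (∑ j ∈ s, a j - a i)
        = (∑ j ∈ s, a j) * (2 * log 2 * (1 - a i / ∑ j ∈ s, a j)) := by field_simp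
      _ ≤ (∑ j ∈ s, a j) * -log (a i / ∑ j ∈ s, a j) :=
          mul_le_mul_of_nonneg_left (two_mul_log_two_mul_one_sub_le_neg_log (by positivity)
            (by rw [div_le_iff₀ hS]; linarith)) hS.le
      _ = (∑ j ∈ s, a j) * (log (∑ j ∈ s, a j) - log (a i)) := by
          rw [log_div hm.ne' hS.ne']; ring
      _ ≤ scaledEntropy s a := mul_log_sub_log_le_scaledEntropy ha hle

lemma scaledEntropy_le_two_mul_log_two_mul_sqrt_add_mul_log {s : Finset ι} (hs : s.Nonempty)
    {a : ι → ℝ} (ha : ∀ i ∈ s, 0 ≤ a i) :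
    scaledEntropy s a ≤ 2 * log 2 * √(s.sup' hs a * (∑ i ∈ s, a i - s.sup' hs a)) +
      (∑ i ∈ s, a i - s.sup' hs a) * log (#s - 1) := by
  classical
  obtain ⟨i, hi, hmi⟩ := exists_mem_eq_sup' hs a
  rw [hmi]
  have hrest : ∑ j ∈ s.erase i, a j = ∑ j ∈ s, a j - a i := by
    rw [← add_sum_erase s a hi]; ring
  have hrest0 : ∀ j ∈ s.erase i, 0 ≤ a j := fun j hj => ha j (mem_of_mem_erase hj)
  have hcard : ((#(s.erase i) : ℕ) : ℝ) = #s - 1 := by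
    rw [card_erase_of_mem hi, Nat.cast_pred hs.card_pos]
  have hbin := scaledBinEntropy_le (ha i hi) (sum_nonneg hrest0)
  have hrestEntropy := scaledEntropy_le_mul_log_card hrest0
  rw [hrest] at hbin hrestEntropy
  rw [scaledEntropy_eq_scaledBinEntropy_add hi, hrest, ← hcard]
  exact add_le_add hbin hrestEntropy

end

section
open Real

variable {X ι : Type*} [Fintype X] [Fintype ι]

noncomputable def bayesError (a : X → ι → ℝ) (hne : (univ : Finset ι).Nonempty) : ℝ :=
  ∑ x, (∑ i, a x i - univ.sup' hne (a x))

variable (a : X → ι → ℝ) (hne : (univ : Finset ι).Nonempty)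

lemma bayesError_nonneg (ha : ∀ x i, 0 ≤ a x i) : 0 ≤ bayesError a hne :=
  sum_nonneg fun x _ => sub_nonneg.2 (sup'_le_sum hne fun i _ => ha x i)

lemma two_mul_log_two_mul_bayesError_le_sum_scaledEntropy (ha : ∀ x i, 0 ≤ a x i) :
    2 * log 2 * bayesError a hne ≤ ∑ x, scaledEntropy univ (a x) := by
  rw [bayesError, mul_sum]
  exact sum_le_sum fun x _ => two_mul_log_two_mul_sub_sup'_le_scaledEntropy hne fun i _ => ha x i

lemma sqrt_one_sub_mul_sqrt_add_mul_log_le {P u : ℝ} (hP0 : 0 ≤ P) (hP1 : P ≤ 1) (hu : 1 ≤ u) :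
    2 * log 2 * (√(1 - P) * √P) + P * log u ≤ 2 * log 2 * √(P * u) := by
  have hA := sq_sqrt (sub_nonneg.2 hP1)
  have hB := sq_sqrt hP0
  have hC := sq_sqrt (sub_nonneg.2 hu)
  have hcs : √(1 - P) + √P * √(u - 1) ≤ √u := by
    rw [le_sqrt (by positivity) (by linarith)]
    nlinarith [sq_nonneg (√(1 - P) * √(u - 1) - √P)]
  calc 2 * log 2 * (√(1 - P) * √P) + P * log u
      ≤ 2 * log 2 * (√(1 - P) * √P) + √P ^ 2 * (2 * log 2 * √(u - 1)) := by
        rw [hB]; gcongr; exact log_le_two_mul_log_two_mul_sqrt_sub_one hu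
    _ = 2 * log 2 * √P * (√(1 - P) + √P * √(u - 1)) := by ring
    _ ≤ 2 * log 2 * √P * √u := by gcongr
    _ = 2 * log 2 * √(P * u) := by rw [sqrt_mul hP0]; ring

lemma sum_scaledEntropy_le_two_mul_log_two_mul_sqrt (ha : ∀ x i, 0 ≤ a x i)
    (ha1 : ∑ x, ∑ i, a x i = 1) (hι : 2 ≤ Fintype.card ι) :
    ∑ x, scaledEntropy univ (a x) ≤
      2 * log 2 * √(bayesError a hne * (Fintype.card ι - 1)) := by
  set P := bayesError a hne
  have hm0 : ∀ x, 0 ≤ univ.sup' hne (a x) := fun x =>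
    (ha x hne.choose).trans (le_sup' (a x) hne.choose_spec)
  have hmax : ∑ x, univ.sup' hne (a x) = 1 - P := by
    simp only [P, bayesError, sum_sub_distrib, ha1]; ring
  have hP1 : P ≤ 1 := by linarith [sum_nonneg fun x (_ : x ∈ univ) => hm0 x]
  calc ∑ x, scaledEntropy univ (a x)
      ≤ ∑ x, (2 * log 2 * √(univ.sup' hne (a x) * (∑ i, a x i - univ.sup' hne (a x))) +
          (∑ i, a x i - univ.sup' hne (a x)) * log (Fintype.card ι - 1)) :=
        sum_le_sum fun x _ =>
          scaledEntropy_le_two_mul_log_two_mul_sqrt_add_mul_log hne fun i _ => ha x i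
    _ = 2 * log 2 * ∑ x, √(univ.sup' hne (a x)) * √(∑ i, a x i - univ.sup' hne (a x)) +
          P * log (Fintype.card ι - 1) := by
        simp only [sum_add_distrib, ← mul_sum, ← sum_mul, sqrt_mul (hm0 _), P, bayesError]
    _ ≤ 2 * log 2 * (√(1 - P) * √P) + P * log (Fintype.card ι - 1) := by
        gcongr
        rw [← hmax]
        exact sum_sqrt_mul_sqrt_le _ hm0 fun x => sub_nonneg.2 (sup'_le_sum hne fun i _ => ha x i)
    _ ≤ 2 * log 2 * √(P * (Fintype.card ι - 1)) :=
        sqrt_one_sub_mul_sqrt_add_mul_log_le (bayesError_nonneg a hne ha) hP1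
          (by have : (2 : ℝ) ≤ Fintype.card ι := by exact_mod_cast hι
              linarith)

lemma log_two_mul_entropy2 (P : X → ℝ) : log 2 * entropy2 P = ∑ x, negMulLog (P x) := by
  rw [entropy2, mul_neg, mul_sum, ← sum_neg_distrib]
  refine sum_congr rfl fun x _ => ?_
  rw [negMulLog, logb]
  field_simp

lemma log_two_mul_entropy_sub_jensenShannon (p : ι → X → ℝ) (w : ι → ℝ)
    (hps : ∀ i, ∑ x, p i x = 1) :
    log 2 * ((-∑ i, w i * logb 2 (w i)) -
        (entropy2 (fun x => ∑ i, w i * p i x) - ∑ i, w i * entropy2 (p i))) =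
      ∑ x, scaledEntropy univ (fun i => w i * p i x) := by
  have hprior : -∑ i, w i * logb 2 (w i) = entropy2 w := rfl
  simp only [hprior, mul_sub, log_two_mul_entropy2, mul_sum, mul_left_comm (log 2)]
  have hmarginal : ∑ x, ∑ i, p i x * negMulLog (w i) = ∑ i, negMulLog (w i) := by
    rw [sum_comm]; simp only [← sum_mul, hps, one_mul]
  simp only [scaledEntropy, sum_sub_distrib, negMulLog_mul, sum_add_distrib, hmarginal]
  rw [sum_comm (s := univ) (t := univ) (f := fun i x => w i * negMulLog (p i x))]
  ring

end

theorem lin_multiclass_bounds {X : Type*} [Fintype X] (k : ℕ) (hk : 0 < k)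
    (p : Fin k → X → ℝ) (π : Fin k → ℝ)
    (hp : ∀ i x, 0 ≤ p i x) (hps : ∀ i, ∑ x, p i x = 1)
    (hπ : ∀ i, 0 ≤ π i) (hπs : ∑ i, π i = 1) :
    (1 / (4 * ((k : ℝ) - 1))) *
        ((-∑ i, π i * Real.logb 2 (π i)) -
          (entropy2 (fun x => ∑ i, π i * p i x) - ∑ i, π i * entropy2 (p i))) ^ 2
      ≤ ∑ x, ((∑ i, π i * p i x) -
          Finset.univ.sup' ⟨⟨0, hk⟩, Finset.mem_univ _⟩ (fun i => π i * p i x)) ∧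
    ∑ x, ((∑ i, π i * p i x) -
          Finset.univ.sup' ⟨⟨0, hk⟩, Finset.mem_univ _⟩ (fun i => π i * p i x))
      ≤ (1 / 2) *
        ((-∑ i, π i * Real.logb 2 (π i)) -
          (entropy2 (fun x => ∑ i, π i * p i x) - ∑ i, π i * entropy2 (p i))) := by
  set a : X → Fin k → ℝ := fun x i => π i * p i x
  have hne : (univ : Finset (Fin k)).Nonempty := ⟨⟨0, hk⟩, mem_univ _⟩
  have ha : ∀ x i, 0 ≤ a x i := fun x i => mul_nonneg (hπ i) (hp i x)
  have ha1 : ∑ x, ∑ i, a x i = 1 := by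
    rw [sum_comm]; simp only [a, ← mul_sum, hps, mul_one, hπs]
  set J := (-∑ i, π i * Real.logb 2 (π i)) -
    (entropy2 (fun x => ∑ i, π i * p i x) - ∑ i, π i * entropy2 (p i))
  change _ ≤ bayesError a hne ∧ bayesError a hne ≤ _
  have hJ : Real.log 2 * J = ∑ x, scaledEntropy univ (a x) :=
    log_two_mul_entropy_sub_jensenShannon p π hps
  have hl : 0 < Real.log 2 := Real.log_pos one_lt_two
  have hP0 := bayesError_nonneg a hne ha
  have hPJ : 2 * bayesError a hne ≤ J := by
    refine le_of_mul_le_mul_left ?_ hl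
    linarith [two_mul_log_two_mul_bayesError_le_sum_scaledEntropy a hne ha]
  refine ⟨?_, by linarith⟩
  obtain rfl | hk2 : k = 1 ∨ 2 ≤ k := by omega
  · simpa using hP0
  have hJP : J ≤ 2 * √(bayesError a hne * (k - 1)) := by
    refine le_of_mul_le_mul_left ?_ hl
    have := sum_scaledEntropy_le_two_mul_log_two_mul_sqrt a hne ha ha1 (by simpa using hk2)
    rw [Fintype.card_fin] at this
    linarith
  have hk1 : (1 : ℝ) ≤ k - 1 := by
    have : (2 : ℝ) ≤ k := by exact_mod_cast hk2
    linarith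
  rw [one_div, inv_mul_le_iff₀ (by positivity)]
  calc J ^ 2 ≤ (2 * √(bayesError a hne * (k - 1))) ^ 2 := pow_le_pow_left₀ (by linarith) hJP 2
    _ = 4 * (k - 1) * bayesError a hne := by
        rw [mul_pow, Real.sq_sqrt (by positivity)]
        ring
end
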